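/- arXiv:2003.09877 — 2 statements merged into one kernel-verified Lean document; each statement's English description precedes it below -/
import Mathlib

section
/- Let h ∈ ℕ with h ≥ 1, and let X be a finite set with |X| ≥ 2, together with a function g : X → ℝ^h such that ‖g(x)‖ ≤ √h (Euclidean norm) for all x ∈ X. Then there exist distinct x, x' ∈ X such that ‖g(x) − g(x')‖ ≤ 4√h · (|X|^{1/h} − 1)^{−1}. -/
/-!
If the balls of radius `δ` around the points were pairwise disjoint, they would all lie in the
ball of radius `R + δ` about the origin, and comparing Haar volumes gives `|X| δⁿ ≤ (R + δ)ⁿ`,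
i.e. `|X|^(1/n) δ ≤ R + δ`. For `δ = 2R / (|X|^(1/n) - 1)` this fails, so two of the balls meet.
-/

open Metric MeasureTheory Module

theorem card_mul_pow_finrank_le_of_pairwiseDisjoint_ball
    {E ι : Type*} [NormedAddCommGroup E] [NormedSpace ℝ E] [FiniteDimensional ℝ E]
    {s : Finset ι} {p : ι → E} {R δ : ℝ} (hR : 0 ≤ R) (hδ : 0 < δ)
    (hp : ∀ i ∈ s, ‖p i‖ ≤ R) (hdisj : (s : Set ι).PairwiseDisjoint fun i ↦ ball (p i) δ) :
    s.card * δ ^ finrank ℝ E ≤ (R + δ) ^ finrank ℝ E := by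
  let _ : MeasurableSpace E := borel E
  have : BorelSpace E := ⟨rfl⟩
  let μ : Measure E := Measure.addHaar
  have hunion : (⋃ i ∈ s, ball (p i) δ) ⊆ ball 0 (R + δ) := by
    simp only [Set.iUnion_subset_iff]
    intro i hi
    exact ball_subset_ball' (by rw [dist_zero_right]; linarith [hp i hi])
  have hvol : s.card * ENNReal.ofReal (δ ^ finrank ℝ E) * μ (ball 0 1)
      ≤ ENNReal.ofReal ((R + δ) ^ finrank ℝ E) * μ (ball 0 1) := by
    calc s.card * ENNReal.ofReal (δ ^ finrank ℝ E) * μ (ball 0 1)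
        = μ (⋃ i ∈ s, ball (p i) δ) := by
          rw [measure_biUnion_finset hdisj fun _ _ ↦ measurableSet_ball]
          simp [Measure.addHaar_ball_of_pos μ _ hδ, mul_assoc]
      _ ≤ μ (ball 0 (R + δ)) := measure_mono hunion
      _ = _ := Measure.addHaar_ball_of_pos μ _ (by positivity)
  rw [ENNReal.mul_le_mul_iff_left (measure_ball_pos μ 0 one_pos).ne' measure_ball_lt_top.ne,
    ← ENNReal.ofReal_natCast, ← ENNReal.ofReal_mul (by positivity),
    ENNReal.ofReal_le_ofReal_iff (by positivity)] at hvol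
  exact hvol

theorem rpow_inv_mul_le_of_mul_pow_le {N a b : ℝ} {n : ℕ} (hn : n ≠ 0) (hN : 0 ≤ N)
    (ha : 0 ≤ a) (hb : 0 ≤ b) (h : N * a ^ n ≤ b ^ n) : N ^ (n⁻¹ : ℝ) * a ≤ b := by
  rwa [← pow_le_pow_iff_left₀ (by positivity) hb hn, mul_pow, Real.rpow_inv_natCast_pow hN hn]

theorem exists_ne_dist_le_of_norm_le {E ι : Type*} [NormedAddCommGroup E] [NormedSpace ℝ E]
    [FiniteDimensional ℝ E] [Nontrivial E] {s : Finset ι} {p : ι → E} {R : ℝ} (hR : 0 < R)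
    (hs : 2 ≤ s.card) (hp : ∀ i ∈ s, ‖p i‖ ≤ R) :
    ∃ i ∈ s, ∃ j ∈ s, i ≠ j ∧
      dist (p i) (p j) ≤ 4 * R * ((s.card : ℝ) ^ (finrank ℝ E : ℝ)⁻¹ - 1)⁻¹ := by
  set n := finrank ℝ E
  set c : ℝ := (s.card : ℝ) ^ (n : ℝ)⁻¹
  have hn : n ≠ 0 := finrank_pos.ne'
  have hc : 1 < c := Real.one_lt_rpow (by exact_mod_cast hs) (by positivity)
  set δ := 2 * R / (c - 1)
  have hδ : 0 < δ := div_pos (by positivity) (by linarith)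
  have hcδ : (c - 1) * δ = 2 * R := mul_div_cancel₀ _ (by linarith)
  have h2δ : 4 * R * (c - 1)⁻¹ = δ + δ := by simp only [δ, div_eq_mul_inv]; ring
  by_contra! hfar
  have hdisj : (s : Set ι).PairwiseDisjoint fun i ↦ ball (p i) δ := by
    intro i hi j hj hij
    exact ball_disjoint_ball (h2δ ▸ (hfar i hi j hj hij).le)
  have hroot : c * δ ≤ R + δ := rpow_inv_mul_le_of_mul_pow_le hn (by positivity) hδ.le
    (by positivity) (card_mul_pow_finrank_le_of_pairwiseDisjoint_ball hR.le hδ hp hdisj)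
  linarith

/-- Packing argument: among at least two points of norm at most `√h` in `ℝ^h`,
two distinct ones are at distance at most `4√h · (|X|^(1/h) − 1)⁻¹`. -/
theorem exists_close_pair {α : Type*} (h : ℕ) (hh : 1 ≤ h)
    (X : Finset α) (hX : 2 ≤ X.card)
    (g : α → EuclideanSpace ℝ (Fin h))
    (hg : ∀ x ∈ X, ‖g x‖ ≤ Real.sqrt h) :
    ∃ x ∈ X, ∃ x' ∈ X, x ≠ x' ∧
      ‖g x - g x'‖ ≤ 4 * Real.sqrt h * ((X.card : ℝ) ^ (1 / (h : ℝ)) - 1)⁻¹ := by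
  have : Nonempty (Fin h) := ⟨⟨0, hh⟩⟩
  have hsqrt : 0 < Real.sqrt h := Real.sqrt_pos.2 (by exact_mod_cast hh)
  simpa [dist_eq_norm, finrank_euclideanSpace_fin, one_div] using
    exists_ne_dist_le_of_norm_le hsqrt hX hg
end

section
/- Let G be a group with finite generating set S (closed under inverses via the alphabet Σ = S ⊔ S^{-1}), let φ : Σ* → G be the evaluation homomorphism, and let W_G = φ^{-1}(1_G) be the word problem language. Define D_L(n), the nonregularity of a language L, as the maximum size of a set of strings in Σ^{≤n} that are pairwise (L,n)-dissimilar, where x, x' ∈ Σ^{≤n} are (L,n)-dissimilar if there exists y with |y| ≤ n − max(|x|,|x'|) such that exactly one of xy, x'y lies in L. Let β_{G,S}(n) = |{g ∈ G : ℓ_S(g) ≤ n}| be the growth function, where ℓ_S(g) is the word length of g with respect to S. Then for all n ∈ ℕ, D_{W_G}(2n) ≥ β_{G,S}(n). -/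
/-- `x` and `x'` are `(L,n)`-dissimilar: some suffix `y` with
`|y| + max(|x|,|x'|) ≤ n` separates them with respect to `L`. -/
def Dissimilar {α : Type*} (L : Set (List α)) (n : ℕ) (x x' : List α) : Prop :=
  ∃ y : List α, y.length + max x.length x'.length ≤ n ∧ ((x ++ y ∈ L) ↔ (x' ++ y ∉ L))

/-- The Dwork–Stockmeyer nonregularity `D_L(n)`: the maximum size of a set of
pairwise `(L,n)`-dissimilar strings of length at most `n`. -/
noncomputable def nonregularity {α : Type*} (L : Set (List α)) (n : ℕ) : ℕ :=
  sSup {k : ℕ | ∃ F : Finset (List α), F.card = k ∧ (∀ x ∈ F, x.length ≤ n) ∧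
    ∀ x ∈ F, ∀ x' ∈ F, x ≠ x' → Dissimilar L n x x'}

/-- The nonregularity of a group word problem is bounded below by the growth
function: `D_{W_G}(2n) ≥ β_{G,S}(n)`. -/
theorem growth_le_nonregularity_wordProblem {G : Type*} [Group G] (S : Finset G)
    (hgen : Subgroup.closure (S : Set G) = ⊤) (n : ℕ) :
    Set.ncard {g : G | ∃ w : List {x : G // x ∈ S ∨ x⁻¹ ∈ S},
        w.length ≤ n ∧ (w.map Subtype.val).prod = g} ≤
      nonregularity
        {w : List {x : G // x ∈ S ∨ x⁻¹ ∈ S} | (w.map Subtype.val).prod = 1} (2 * n) := by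
  classical
  set A := {x : G // x ∈ S ∨ x⁻¹ ∈ S} with hA
  set L : Set (List A) := {w : List A | (w.map Subtype.val).prod = 1} with hL
  set B : Set G := {g : G | ∃ w : List A, w.length ≤ n ∧ (w.map Subtype.val).prod = g}
    with hB
  -- A is finite
  have hAset : {x : G | x ∈ S ∨ x⁻¹ ∈ S}.Finite := by
    have : {x : G | x ∈ S ∨ x⁻¹ ∈ S} = ↑S ∪ (fun x : G => x⁻¹) ⁻¹' ↑S := by
      ext x; simp [Set.mem_union]
    rw [this]
    exact S.finite_toSet.union (S.finite_toSet.preimage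
      (Set.injOn_of_injective inv_injective))
  have hAfin : Finite A := hAset
  have hwords : {w : List A | w.length ≤ n}.Finite := List.finite_length_le A n
  have hBfin : B.Finite := by
    have : B ⊆ (fun w : List A => (w.map Subtype.val).prod) '' {w | w.length ≤ n} := by
      rintro g ⟨w, hw, hp⟩
      exact ⟨w, hw, hp⟩
    exact (hwords.image _).subset this
  have hrep : ∀ g ∈ B, ∃ w : List A, w.length ≤ n ∧ (w.map Subtype.val).prod = g :=
    fun g hg => hg
  set f : G → List A := fun g => if h : g ∈ B then (hrep g h).choose else [] with hf
  have hflen : ∀ g ∈ B, (f g).length ≤ n := by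
    intro g hg; rw [hf]; simp only [dif_pos hg]; exact (hrep g hg).choose_spec.1
  have hfprod : ∀ g ∈ B, ((f g).map Subtype.val).prod = g := by
    intro g hg; rw [hf]; simp only [dif_pos hg]; exact (hrep g hg).choose_spec.2
  set F : Finset (List A) := hBfin.toFinset.image f with hF
  have hcard : F.card = B.ncard := by
    rw [hF, Finset.card_image_of_injOn, Set.ncard_eq_toFinset_card B hBfin]
    intro g hg g' hg' hgg'
    simp only [Finset.mem_coe, Set.Finite.mem_toFinset] at hg hg'
    rw [← hfprod g hg, ← hfprod g' hg', hgg']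
  -- the inverse letter map
  set Ainv : A → A := fun a => ⟨a.val⁻¹, by rw [inv_inv]; exact a.2.symm⟩ with hAinv
  have key : B.ncard ∈ {k : ℕ | ∃ F : Finset (List A), F.card = k ∧
      (∀ x ∈ F, x.length ≤ 2 * n) ∧
      ∀ x ∈ F, ∀ x' ∈ F, x ≠ x' → Dissimilar L (2 * n) x x'} := by
    refine ⟨F, hcard, ?_, ?_⟩
    · intro x hx
      rw [hF, Finset.mem_image] at hx
      obtain ⟨g, hg, rfl⟩ := hx
      rw [Set.Finite.mem_toFinset] at hg
      exact le_trans (hflen g hg) (by omega)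
    · intro x hx x' hx' hne
      rw [hF, Finset.mem_image] at hx hx'
      obtain ⟨g, hg, rfl⟩ := hx
      obtain ⟨g', hg', rfl⟩ := hx'
      rw [Set.Finite.mem_toFinset] at hg hg'
      refine ⟨((f g).map Ainv).reverse, ?_, ?_⟩
      · simp only [List.length_reverse, List.length_map]
        have := hflen g hg; have := hflen g' hg'; omega
      · have hyval : ∀ w : List A,
            ((w ++ ((f g).map Ainv).reverse).map Subtype.val).prod
            = (w.map Subtype.val).prod * g⁻¹ := by
          intro w
          rw [List.map_append, List.prod_append, List.map_reverse, List.map_map]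
          have hcomp : (Subtype.val ∘ Ainv) = (fun x : G => x⁻¹) ∘ Subtype.val := rfl
          rw [hcomp, ← List.map_map, ← List.prod_inv_reverse, hfprod g hg]
        constructor
        · intro _ hmem
          rw [hL, Set.mem_setOf_eq, hyval, hfprod g' hg'] at hmem
          exact hne (by rw [mul_inv_eq_one] at hmem; rw [hmem])
        · intro _
          show ((f g ++ ((f g).map Ainv).reverse).map Subtype.val).prod = 1
          rw [hyval, hfprod g hg, mul_inv_cancel]
  have hbdd : BddAbove {k : ℕ | ∃ F : Finset (List A), F.card = k ∧
      (∀ x ∈ F, x.length ≤ 2 * n) ∧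
      ∀ x ∈ F, ∀ x' ∈ F, x ≠ x' → Dissimilar L (2 * n) x x'} := by
    refine ⟨(List.finite_length_le A (2 * n)).toFinset.card, ?_⟩
    rintro k ⟨F', rfl, hlen, -⟩
    apply Finset.card_le_card
    intro x hx
    rw [Set.Finite.mem_toFinset]
    exact hlen x hx
  exact le_csSup hbdd key
end
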